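/- The hoisting rewrite relation is locally confluent, and hence (being terminating) confluent, so the normal form under hoisting is unique. -/

import Mathlib

/-!
Statement 10: The hoisting rewrite relation is locally confluent, and hence
(being terminating) confluent, so the normal form under hoisting is unique.
-/

namespace CostLabelling

abbrev Var := ℕ
abbrev Label := ℕ

inductive Tm : Type where
  | var : Var → Tm
  | lam : List Var → Tm → Tm
  | app : Tm → List Tm → Tm
  | tup : List Tm → Tm
  | proj : ℕ → Tm → Tm
  | letin : Var → Tm → Tm → Tm
  | pre : Label → Tm → Tm
  | post : Tm → Label → Tm

inductive IsValue : Tm → Prop where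
  | var : ∀ x, IsValue (.var x)
  | lam : ∀ xs M, IsValue (.lam xs M)
  | tup : ∀ Vs, (∀ V ∈ Vs, IsValue V) → IsValue (.tup Vs)

mutual
def subst (V : Tm) (x : Var) : Tm → Tm
  | .var y => if y = x then V else .var y
  | .lam xs M => if x ∈ xs then .lam xs M else .lam xs (subst V x M)
  | .app M Ns => .app (subst V x M) (substList V x Ns)
  | .tup Ms => .tup (substList V x Ms)
  | .proj i M => .proj i (subst V x M)
  | .letin y M N => .letin y (subst V x M) (if y = x then N else subst V x N)
  | .pre l M => .pre l (subst V x M)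
  | .post M l => .post (subst V x M) l
def substList (V : Tm) (x : Var) : List Tm → List Tm
  | [] => []
  | M :: Ms => subst V x M :: substList V x Ms
end

mutual
def fv : Tm → List Var
  | .var x => [x]
  | .lam xs M => (fv M).filter (fun y => y ∉ xs)
  | .app M Ns => fv M ++ fvList Ns
  | .tup Ms => fvList Ms
  | .proj _ M => fv M
  | .letin y M N => fv M ++ (fv N).filter (fun z => z ≠ y)
  | .pre _ M => fv M
  | .post M _ => fv M
def fvList : List Tm → List Var
  | [] => []
  | M :: Ms => fv M ++ fvList Ms
end

/-- `C` is not a function. -/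
def NonFun (C : Tm) : Prop := ∀ ys B, C ≠ .lam ys B

/-- Restricted (simple) terms `T ::= @(x,x⁺) | let x = C in T | ℓ > T` with
`C ::= (x*) | πᵢ(x)` : terms containing no function definitions. -/
inductive Simple : Tm → Prop where
  | app : ∀ (x : Var) (ys : List Var), Simple (.app (.var x) (ys.map .var))
  | letTup : ∀ x (ys : List Var) T, Simple T →
      Simple (.letin x (.tup (ys.map .var)) T)
  | letProj : ∀ x i (y : Var) T, Simple T →
      Simple (.letin x (.proj i (.var y)) T)
  | pre : ∀ l T, Simple T → Simple (.pre l T)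

/-- Hoisting contexts
`D ::= [] | let x = C in D | let x = λy⁺.D in M | ℓ > D`. -/
inductive HCtx : Type where
  | hole : HCtx
  | letC : Var → Tm → HCtx → HCtx
  | letLam : Var → List Var → HCtx → Tm → HCtx
  | pre : Label → HCtx → HCtx

def hplug : HCtx → Tm → Tm
  | .hole, M => M
  | .letC x C D, M => .letin x C (hplug D M)
  | .letLam x ys D N, M => .letin x (.lam ys (hplug D M)) N
  | .pre l D, M => .pre l (hplug D M)

/-- The hoisting transformations `(h₁)`, `(h₂)`, `(h₃)`, applied under a
hoisting context `D`. -/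
inductive Hoist : Tm → Tm → Prop where
  | h1 : ∀ D x C y (zs : List Var) T M, Simple T → NonFun C →
      x ∉ fv (.lam zs T) →
      Hoist (hplug D (.letin x C (.letin y (.lam zs T) M)))
            (hplug D (.letin y (.lam zs T) (.letin x C M)))
  | h2 : ∀ D x (ws : List Var) y (zs : List Var) T M N, Simple T →
      (∀ w ∈ ws, w ∉ fv (.lam zs T)) →
      Hoist (hplug D (.letin x (.lam ws (.letin y (.lam zs T) M)) N))
            (hplug D (.letin y (.lam zs T) (.letin x (.lam ws M) N)))
  | h3 : ∀ D l y (zs : List Var) T M, Simple T →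
      Hoist (hplug D (.pre l (.letin y (.lam zs T) M)))
            (hplug D (.letin y (.lam zs T) (.pre l M)))

/-- Zero or more hoisting steps. -/
abbrev HoistStar : Tm → Tm → Prop := Relation.ReflTransGen Hoist

/-- `N` is a hoisting normal form of `M`. -/
def HoistNF (M N : Tm) : Prop := HoistStar M N ∧ ∀ P, ¬ Hoist N P


/-!
Every hoisting redex lifts a definition `let y = λzs.T in M` with `T` simple out of a one-layer
frame (`let x = C in □`, `let x = λws.□ in N` or `ℓ > □`). A simple term contains neither a redex
nor a function definition, so the definition being lifted is not itself a redex, the three rules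
never overlap at the same position, and every other step from the redex takes place either in
`M` or beside the frame, where it commutes with the hoisting. Hence two steps from one term can
be joined with at most one step on each side, and the Church–Rosser lemma gives confluence
without any appeal to termination. A normal form, admitting no step, is then the unique common
reduct of any two.
-/

end CostLabelling

namespace Relation

theorem ReflGen.lift {α β : Type*} {r : α → α → Prop} {p : β → β → Prop} (f : α → β)
    (hf : ∀ a b, r a b → p (f a) (f b)) {a b : α} : ReflGen r a b → ReflGen p (f a) (f b)
  | .refl => .refl
  | .single h => .single (hf _ _ h)

theorem Join.reflGen_lift {α β : Type*} {r : α → α → Prop} {p : β → β → Prop}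
    (f : α → β) (hf : ∀ a b, r a b → p (f a) (f b)) {a b : α} (h : Join (ReflGen r) a b) :
    Join (ReflGen p) (f a) (f b) :=
  let ⟨c, hac, hbc⟩ := h
  ⟨f c, hac.lift f hf, hbc.lift f hf⟩

end Relation

namespace CostLabelling

open Relation

/-- Hoisting presented by congruence rules instead of hoisting contexts. -/
inductive HoistStep : Tm → Tm → Prop where
  | h1 : ∀ x C y (zs : List Var) T M, Simple T → NonFun C →
      x ∉ fv (.lam zs T) →
      HoistStep (.letin x C (.letin y (.lam zs T) M))
        (.letin y (.lam zs T) (.letin x C M))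
  | h2 : ∀ x (ws : List Var) y (zs : List Var) T M N, Simple T →
      (∀ w ∈ ws, w ∉ fv (.lam zs T)) →
      HoistStep (.letin x (.lam ws (.letin y (.lam zs T) M)) N)
        (.letin y (.lam zs T) (.letin x (.lam ws M) N))
  | h3 : ∀ l y (zs : List Var) T M, Simple T →
      HoistStep (.pre l (.letin y (.lam zs T) M)) (.letin y (.lam zs T) (.pre l M))
  | letBody : ∀ x C {N N'}, HoistStep N N' → HoistStep (.letin x C N) (.letin x C N')
  | letLamBody : ∀ x ys {B B'} N, HoistStep B B' →
      HoistStep (.letin x (.lam ys B) N) (.letin x (.lam ys B') N)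
  | pre : ∀ l {M M'}, HoistStep M M' → HoistStep (.pre l M) (.pre l M')

def hcomp : HCtx → HCtx → HCtx
  | .hole, D => D
  | .letC x C D₁, D => .letC x C (hcomp D₁ D)
  | .letLam x ys D₁ N, D => .letLam x ys (hcomp D₁ D) N
  | .pre l D₁, D => .pre l (hcomp D₁ D)

theorem hplug_hcomp (D₁ D₂ : HCtx) (M : Tm) :
    hplug (hcomp D₁ D₂) M = hplug D₁ (hplug D₂ M) := by
  induction D₁ <;> simp [hcomp, hplug, *]

theorem Hoist.hplug {M N : Tm} (h : Hoist M N) (D : HCtx) :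
    Hoist (hplug D M) (hplug D N) := by
  cases h with
  | h1 D₀ x C y zs T M hT hC hx =>
      rw [← hplug_hcomp, ← hplug_hcomp]; exact .h1 _ _ _ _ _ _ _ hT hC hx
  | h2 D₀ x ws y zs T M N hT hw =>
      rw [← hplug_hcomp, ← hplug_hcomp]; exact .h2 _ _ _ _ _ _ _ _ hT hw
  | h3 D₀ l y zs T M hT =>
      rw [← hplug_hcomp, ← hplug_hcomp]; exact .h3 _ _ _ _ _ _ hT

theorem HoistStep.hplug {M N : Tm} (h : HoistStep M N) (D : HCtx) :
    HoistStep (hplug D M) (hplug D N) := by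
  induction D with
  | hole => exact h
  | letC x C D ih => exact .letBody x C ih
  | letLam x ys D N ih => exact .letLamBody x ys N ih
  | pre l D ih => exact .pre l ih

theorem HoistStep.toHoist {M N : Tm} (h : HoistStep M N) : Hoist M N := by
  induction h with
  | h1 x C y zs T M hT hC hx => exact .h1 .hole _ _ _ _ _ _ hT hC hx
  | h2 x ws y zs T M N hT hw => exact .h2 .hole _ _ _ _ _ _ _ hT hw
  | h3 l y zs T M hT => exact .h3 .hole _ _ _ _ _ hT
  | letBody x C _ ih => exact ih.hplug (.letC x C .hole)
  | letLamBody x ys N _ ih => exact ih.hplug (.letLam x ys .hole N)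
  | pre l _ ih => exact ih.hplug (.pre l .hole)

theorem Hoist.toHoistStep {M N : Tm} (h : Hoist M N) : HoistStep M N := by
  cases h with
  | h1 D x C y zs T M hT hC hx => exact (HoistStep.h1 _ _ _ _ _ _ hT hC hx).hplug D
  | h2 D x ws y zs T M N hT hw => exact (HoistStep.h2 _ _ _ _ _ _ _ hT hw).hplug D
  | h3 D l y zs T M hT => exact (HoistStep.h3 _ _ _ _ _ hT).hplug D

theorem hoist_eq_hoistStep : Hoist = HoistStep :=
  funext₂ fun _ _ ↦ propext ⟨Hoist.toHoistStep, HoistStep.toHoist⟩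

theorem Simple.ne_letin_lam {T : Tm} (h : Simple T) (y : Var) (zs : List Var) (S M : Tm) :
    T ≠ .letin y (.lam zs S) M := by
  cases h <;> simp

theorem Simple.not_hoistStep {T : Tm} (h : Simple T) (P : Tm) : ¬ HoistStep T P := by
  induction h generalizing P with
  | app => nofun
  | letTup _ _ _ hT ih | letProj _ _ _ _ hT ih =>
      intro h
      cases h with
      | h1 => exact hT.ne_letin_lam _ _ _ _ rfl
      | letBody _ _ h => exact ih _ h
  | pre _ _ hT ih =>
      intro h
      cases h with
      | h3 => exact hT.ne_letin_lam _ _ _ _ rfl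
      | pre _ h => exact ih _ h

theorem HoistStep.eq_letin_lam_of_simple {y : Var} {zs : List Var} {T M P : Tm} (hT : Simple T)
    (h : HoistStep (.letin y (.lam zs T) M) P) :
    ∃ M', HoistStep M M' ∧ P = .letin y (.lam zs T) M' := by
  cases h with
  | h1 _ _ _ _ _ _ _ hC => exact absurd rfl (hC _ _)
  | h2 => exact absurd rfl (hT.ne_letin_lam _ _ _ _)
  | letBody _ _ hM => exact ⟨_, hM, rfl⟩
  | letLamBody _ _ _ hT' => exact absurd hT' (hT.not_hoistStep _)

section Diamond

variable {x y : Var} {ws zs : List Var} {C T M N P : Tm}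

theorem HoistStep.join_of_h1 (hT : Simple T) (hC : NonFun C) (hx : x ∉ fv (.lam zs T))
    (h : HoistStep (.letin x C (.letin y (.lam zs T) M)) P) :
    Join (ReflGen HoistStep) (.letin y (.lam zs T) (.letin x C M)) P := by
  cases h with
  | h1 => exact ⟨_, .refl, .refl⟩
  | h2 => exact absurd rfl (hC _ _)
  | letBody _ _ h =>
      obtain ⟨M', hM, rfl⟩ := h.eq_letin_lam_of_simple hT
      exact ⟨_, .single (.letBody _ _ (.letBody _ _ hM)), .single (.h1 _ _ _ _ _ _ hT hC hx)⟩
  | letLamBody => exact absurd rfl (hC _ _)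

theorem HoistStep.join_of_h2 (hT : Simple T) (hw : ∀ w ∈ ws, w ∉ fv (.lam zs T))
    (h : HoistStep (.letin x (.lam ws (.letin y (.lam zs T) M)) N) P) :
    Join (ReflGen HoistStep) (.letin y (.lam zs T) (.letin x (.lam ws M) N)) P := by
  cases h with
  | h1 _ _ _ _ _ _ _ hC => exact absurd rfl (hC _ _)
  | h2 => exact ⟨_, .refl, .refl⟩
  | letBody _ _ hN =>
      exact ⟨_, .single (.letBody _ _ (.letBody _ _ hN)), .single (.h2 _ _ _ _ _ _ _ hT hw)⟩
  | letLamBody _ _ _ h =>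
      obtain ⟨M', hM, rfl⟩ := h.eq_letin_lam_of_simple hT
      exact ⟨_, .single (.letBody _ _ (.letLamBody _ _ _ hM)), .single (.h2 _ _ _ _ _ _ _ hT hw)⟩

theorem HoistStep.join_of_h3 {l : Label} (hT : Simple T)
    (h : HoistStep (.pre l (.letin y (.lam zs T) M)) P) :
    Join (ReflGen HoistStep) (.letin y (.lam zs T) (.pre l M)) P := by
  cases h with
  | h3 => exact ⟨_, .refl, .refl⟩
  | pre _ h =>
      obtain ⟨M', hM, rfl⟩ := h.eq_letin_lam_of_simple hT
      exact ⟨_, .single (.letBody _ _ (.pre _ hM)), .single (.h3 _ _ _ _ _ hT)⟩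

end Diamond

theorem HoistStep.join {M N₁ N₂ : Tm} (h₁ : HoistStep M N₁) (h₂ : HoistStep M N₂) :
    Join (ReflGen HoistStep) N₁ N₂ := by
  induction h₁ generalizing N₂ with
  | h1 _ _ _ _ _ _ hT hC hx => exact join_of_h1 hT hC hx h₂
  | h2 _ _ _ _ _ _ _ hT hw => exact join_of_h2 hT hw h₂
  | h3 _ _ _ _ _ hT => exact join_of_h3 hT h₂
  | letBody x C hN ih =>
      cases h₂ with
      | h1 _ _ _ _ _ _ hT hC hx => exact symm (join_of_h1 hT hC hx (.letBody _ _ hN))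
      | h2 _ _ _ _ _ _ _ hT hw => exact symm (join_of_h2 hT hw (.letBody _ _ hN))
      | letBody _ _ hN' => exact (ih hN').reflGen_lift _ fun _ _ ↦ .letBody x C
      | letLamBody _ _ _ hB => exact ⟨_, .single (.letLamBody _ _ _ hB), .single (.letBody _ _ hN)⟩
  | letLamBody x ys N hB ih =>
      cases h₂ with
      | h1 _ _ _ _ _ _ _ hC => exact absurd rfl (hC _ _)
      | h2 _ _ _ _ _ _ _ hT hw => exact symm (join_of_h2 hT hw (.letLamBody _ _ _ hB))
      | letBody _ _ hN => exact ⟨_, .single (.letBody _ _ hN), .single (.letLamBody _ _ _ hB)⟩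
      | letLamBody _ _ _ hB' =>
          exact (ih hB').reflGen_lift (fun B ↦ Tm.letin x (.lam ys B) N)
            fun _ _ ↦ HoistStep.letLamBody x ys N
  | pre l hM ih =>
      cases h₂ with
      | h3 _ _ _ _ _ hT => exact symm (join_of_h3 hT (.pre _ hM))
      | pre _ hM' => exact (ih hM').reflGen_lift _ fun _ _ ↦ .pre l

theorem hoistStar_confluent {M N₁ N₂ : Tm} (h₁ : HoistStar M N₁) (h₂ : HoistStar M N₂) :
    Join HoistStar N₁ N₂ := by
  rw [HoistStar, hoist_eq_hoistStep] at *
  refine church_rosser (fun _ _ _ hab hac ↦ ?_) h₁ h₂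
  obtain ⟨d, hbd, hcd⟩ := hab.join hac
  exact ⟨d, hbd, hcd.to_reflTransGen⟩

/-- The hoisting relation is locally confluent, hence
confluent, and normal forms are unique. -/
theorem hoisting_confluent :
    (∀ M N₁ N₂, Hoist M N₁ → Hoist M N₂ →
      ∃ P, HoistStar N₁ P ∧ HoistStar N₂ P) ∧
    (∀ M N₁ N₂, HoistStar M N₁ → HoistStar M N₂ →
      ∃ P, HoistStar N₁ P ∧ HoistStar N₂ P) ∧
    (∀ M N₁ N₂, HoistNF M N₁ → HoistNF M N₂ → N₁ = N₂) := by
  refine ⟨fun _ _ _ h₁ h₂ ↦ hoistStar_confluent (.single h₁) (.single h₂),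
    fun _ _ _ ↦ hoistStar_confluent, fun _ _ _ ⟨h₁, hnf₁⟩ ⟨h₂, hnf₂⟩ ↦ ?_⟩
  obtain ⟨P, h₁P, h₂P⟩ := hoistStar_confluent h₁ h₂
  exact ((reflTransGen_iff_eq hnf₁).1 h₁P).symm.trans ((reflTransGen_iff_eq hnf₂).1 h₂P)

end CostLabelling
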